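/- arXiv:1906.10016 — 2 statements merged into one kernel-verified Lean document; each statement's English description precedes it below -/
import Mathlib

section
/- Let X_1,…,X_n be independent Bernoulli random variables with P(X_i = 1) = p_i ∈ (0,1), W = Σ_{i=1}^n X_i, μ = Σ_{i=1}^n p_i and μ₂ = Σ_{i=1}^n p_i². Then for every integer k with k > μ and k ≥ 2, |P(W ≥ k)/F̄_μ(k) − 1| ≤ C1(μ,k)·μ₂. -/
open MeasureTheory ProbabilityTheory Finset Real

/-- Poisson point probability `π_j(λ) = e^{-λ} λ^j / j!`. -/
noncomputable def poissonPMF (l : ℝ) (j : ℕ) : ℝ := Real.exp (-l) * l ^ j / (Nat.factorial j)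

/-- Poisson CDF `F_λ(j) = Σ_{i=0}^{j} π_i(λ)`. -/
noncomputable def poissonCDF (l : ℝ) (j : ℕ) : ℝ := ∑ i ∈ Finset.range (j + 1), poissonPMF l i

/-- Poisson right tail `F̄_λ(j) = Σ_{i=j}^{∞} π_i(λ)`. -/
noncomputable def poissonTail (l : ℝ) (j : ℕ) : ℝ := ∑' i : ℕ, poissonPMF l (j + i)

/-- `C0(λ,k) = F_λ(k-1)/(k·π_k(λ))`. -/
noncomputable def SteinC0 (l : ℝ) (k : ℕ) : ℝ := poissonCDF l (k - 1) / (k * poissonPMF l k)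

/-- `C1(λ,k)`. -/
noncomputable def SteinC1 (l : ℝ) (k : ℕ) : ℝ :=
  SteinC0 l k * (1 - min (poissonCDF l (k - 2) * l / ((k - 1) * poissonCDF l (k - 1)))
    (poissonTail l (k + 1) * k / (poissonTail l k * l)))

/-- `C2(λ,k)`. -/
noncomputable def SteinC2 (l : ℝ) (k : ℕ) : ℝ :=
  SteinC0 l k * (2 - poissonCDF l (k - 2) * l / ((k - 1) * poissonCDF l (k - 1))
    - poissonTail l (k + 1) * k / (poissonTail l k * l))

/-- `f` solves the Poisson–Stein equation for the indicator of `[k,∞)`, with `f 0 = f 1`. -/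
def IsSteinSolution (l : ℝ) (k : ℕ) (f : ℕ → ℝ) : Prop :=
  f 0 = f 1 ∧ ∀ j : ℕ, l * f (j + 1) - (j : ℝ) * f j =
    (if k ≤ j then (1 : ℝ) else 0) - poissonTail l k

lemma poissonPMF_pos {l : ℝ} (hl : 0 < l) (j : ℕ) : 0 < poissonPMF l j := by
  unfold _root_.poissonPMF
  positivity

lemma poissonPMF_nonneg {l : ℝ} (hl : 0 < l) (j : ℕ) : 0 ≤ poissonPMF l j :=
  (poissonPMF_pos hl j).le

lemma summable_poissonPMF (l : ℝ) : Summable (poissonPMF l) := by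
  have : poissonPMF l = fun j => Real.exp (-l) * (l ^ j / (Nat.factorial j)) := by
    funext j; unfold _root_.poissonPMF; ring
  rw [this]
  exact (Real.summable_pow_div_factorial l).mul_left _

lemma tsum_poissonPMF (l : ℝ) : ∑' j, poissonPMF l j = 1 := by
  have h : ∑' j, poissonPMF l j = Real.exp (-l) * ∑' j : ℕ, l ^ j / (Nat.factorial j) := by
    rw [← tsum_mul_left]
    congr 1; funext j; unfold _root_.poissonPMF; ring
  have hexp : ∑' j : ℕ, l ^ j / (Nat.factorial j : ℝ) = Real.exp l := by
    rw [Real.exp_eq_exp_ℝ, NormedSpace.exp_eq_tsum_div]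
  rw [h, hexp, ← Real.exp_add]
  simp

lemma summable_poissonPMF_add (l : ℝ) (j : ℕ) : Summable (fun i => poissonPMF l (j + i)) := by
  have := (summable_nat_add_iff (f := poissonPMF l) j).mpr (summable_poissonPMF l)
  refine this.congr fun i => by rw [Nat.add_comm]

lemma poissonCDF_add_tail (l : ℝ) (j : ℕ) : poissonCDF l j + poissonTail l (j + 1) = 1 := by
  have h := Summable.sum_add_tsum_nat_add (j + 1) (summable_poissonPMF l)
  rw [tsum_poissonPMF] at h
  rw [← h]
  congr 1
  unfold poissonTail
  exact tsum_congr fun i => by rw [Nat.add_comm]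

lemma poissonTail_pos {l : ℝ} (hl : 0 < l) (j : ℕ) : 0 < poissonTail l j := by
  have h0 : poissonPMF l (j + 0) ≤ poissonTail l j :=
    Summable.le_tsum (summable_poissonPMF_add l j) 0 (fun i _ => poissonPMF_nonneg hl _)
  exact lt_of_lt_of_le (poissonPMF_pos hl _) h0

lemma poissonPMF_succ (l : ℝ) (j : ℕ) :
    ((j : ℝ) + 1) * poissonPMF l (j + 1) = l * poissonPMF l j := by
  unfold _root_.poissonPMF
  rw [Nat.factorial_succ]
  push_cast
  have : (Nat.factorial j : ℝ) ≠ 0 := Nat.cast_ne_zero.mpr (Nat.factorial_ne_zero j)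
  field_simp
  ring

noncomputable def steinG (l : ℝ) (j : ℕ) : ℝ :=
  ∑ m ∈ Finset.range (j + 1), (j.descFactorial m : ℝ) / l ^ m

lemma steinG_zero (l : ℝ) : steinG l 0 = 1 := by simp [steinG]

lemma steinG_eq_sum (l : ℝ) {j N : ℕ} (h : j ≤ N) :
    steinG l j = ∑ m ∈ Finset.range (N + 1), (j.descFactorial m : ℝ) / l ^ m := by
  unfold steinG
  refine Finset.sum_subset ?_ ?_
  · intro m hm; rw [Finset.mem_range] at *; omega
  · intro m _ hm
    rw [Finset.mem_range, not_lt] at hm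
    have : j.descFactorial m = 0 := Nat.descFactorial_eq_zero_iff_lt.mpr (by omega)
    rw [this]; simp

lemma desc_succ_left (j m : ℕ) :
    (j + 1).descFactorial (m + 1) = (m + 1) * j.descFactorial m + j.descFactorial (m + 1) := by
  rw [Nat.succ_descFactorial_succ, Nat.descFactorial_succ]
  rcases le_or_gt m j with h | h
  · have : m + 1 + (j - m) = j + 1 := by omega
    rw [← this]; ring
  · have h1 : j.descFactorial m = 0 := Nat.descFactorial_eq_zero_iff_lt.mpr h
    have h2 : j - m = 0 := by omega
    rw [h1, h2]; ring

lemma steinG_sub (l : ℝ) {j N : ℕ} (h : j + 1 ≤ N) :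
    steinG l (j + 1) - steinG l j
      = ∑ m ∈ Finset.range N, ((m + 1) * j.descFactorial m : ℝ) / l ^ (m + 1) := by
  rw [steinG_eq_sum l h, steinG_eq_sum l (Nat.le_of_succ_le h), ← Finset.sum_sub_distrib]
  rw [Finset.sum_range_succ' (fun m => ((j+1).descFactorial m : ℝ) / l ^ m - (j.descFactorial m : ℝ) / l ^ m) N]
  simp only [Nat.descFactorial_zero, pow_zero]
  rw [show ((1:ℕ):ℝ)/1 - ((1:ℕ):ℝ)/1 = 0 by norm_num, add_zero]
  refine Finset.sum_congr rfl fun m _ => ?_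
  rw [div_sub_div_same, desc_succ_left]
  push_cast
  ring_nf

lemma steinG_sub_nonneg {l : ℝ} (hl : 0 < l) (j : ℕ) : 0 ≤ steinG l (j + 1) - steinG l j := by
  rw [steinG_sub l (le_refl (j+1))]
  refine Finset.sum_nonneg fun m _ => by positivity

lemma steinG_sub_mono {l : ℝ} (hl : 0 < l) {j j' : ℕ} (h : j ≤ j') :
    steinG l (j + 1) - steinG l j ≤ steinG l (j' + 1) - steinG l j' := by
  rw [steinG_sub l (by omega : j + 1 ≤ j' + 1), steinG_sub l (le_refl (j' + 1))]
  refine Finset.sum_le_sum fun m _ => ?_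
  have hd : (j.descFactorial m : ℝ) ≤ (j'.descFactorial m : ℝ) :=
    Nat.cast_le.mpr (Nat.descFactorial_le m h)
  have : (0:ℝ) < l ^ (m+1) := by positivity
  gcongr

lemma steinG_succ (l : ℝ) (j : ℕ) :
    steinG l (j + 1) = ((j : ℝ) + 1) / l * steinG l j + 1 := by
  unfold steinG
  rw [Finset.sum_range_succ' (fun m => (((j+1).descFactorial m : ℕ) : ℝ) / l ^ m) (j+1)]
  simp only [Nat.descFactorial_zero, pow_zero]
  rw [Finset.mul_sum]
  congr 1
  · refine Finset.sum_congr rfl fun m _ => ?_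
    rw [Nat.succ_descFactorial_succ]
    push_cast
    rw [pow_succ]
    ring
  · norm_num

noncomputable def steinH (l : ℝ) (j : ℕ) : ℝ :=
  ∑' m : ℕ, l ^ (m + 1) * ((j.factorial : ℝ) / ((j + m + 1).factorial))

lemma factPos (j : ℕ) : (0:ℝ) < (j.factorial : ℝ) := by
  exact_mod_cast j.factorial_pos

lemma fact_div_le (j m : ℕ) : ((j.factorial : ℝ) / ((j + m + 1).factorial)) ≤ 1 / m.factorial := by
  rw [div_le_div_iff₀ (factPos _) (factPos _), one_mul]
  have h1 : j.factorial * m.factorial ≤ (j + m).factorial :=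
    Nat.le_of_dvd (j + m).factorial_pos (Nat.factorial_mul_factorial_dvd_factorial_add j m)
  have h2 : (j + m).factorial ≤ (j + m + 1).factorial := Nat.factorial_le (by omega)
  exact_mod_cast h1.trans h2

lemma fact_div_le' (j m : ℕ) :
    ((m:ℝ) + 1) * ((j.factorial : ℝ) / ((j + m + 2).factorial)) ≤ 1 / m.factorial := by
  rw [← mul_div_assoc, div_le_div_iff₀ (factPos _) (factPos _), one_mul]
  have h1 : j.factorial * (m + 1).factorial ≤ (j + (m + 1)).factorial :=
    Nat.le_of_dvd (Nat.factorial_pos _) (Nat.factorial_mul_factorial_dvd_factorial_add j (m + 1))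
  have h2 : (j + (m + 1)).factorial ≤ (j + m + 2).factorial := Nat.factorial_le (by omega)
  have : (j.factorial * (m + 1).factorial : ℝ) ≤ ((j + m + 2).factorial : ℝ) := by
    exact_mod_cast h1.trans h2
  calc ((m:ℝ) + 1) * (j.factorial : ℝ) * m.factorial
      = (j.factorial : ℝ) * (m + 1).factorial := by
        rw [Nat.factorial_succ]; push_cast; ring
    _ ≤ ((j + m + 2).factorial : ℝ) := this

lemma summable_geomfact (l : ℝ) : Summable (fun m : ℕ => l ^ (m + 1) / m.factorial) := by
  have := (Real.summable_pow_div_factorial l).mul_left l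
  refine this.congr fun m => ?_
  rw [pow_succ]
  ring

lemma summable_steinH_terms {l : ℝ} (hl : 0 < l) (j : ℕ) :
    Summable (fun m : ℕ => l ^ (m + 1) * ((j.factorial : ℝ) / ((j + m + 1).factorial))) := by
  refine Summable.of_nonneg_of_le (fun m => by positivity) (fun m => ?_) (summable_geomfact l)
  rw [div_eq_mul_one_div (l ^ (m+1))]
  exact mul_le_mul_of_nonneg_left (fact_div_le j m) (by positivity)

lemma summable_steinH_sub {l : ℝ} (hl : 0 < l) (j : ℕ) :
    Summable (fun m : ℕ => l ^ (m + 1) * (((m:ℝ) + 1) * ((j.factorial : ℝ) / ((j + m + 2).factorial)))) := by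
  refine Summable.of_nonneg_of_le (fun m => by positivity) (fun m => ?_) (summable_geomfact l)
  rw [div_eq_mul_one_div (l ^ (m+1))]
  exact mul_le_mul_of_nonneg_left (fact_div_le' j m) (by positivity)

lemma steinH_sub {l : ℝ} (hl : 0 < l) (j : ℕ) :
    steinH l j - steinH l (j + 1)
      = ∑' m : ℕ, l ^ (m + 1) * (((m:ℝ) + 1) * ((j.factorial : ℝ) / ((j + m + 2).factorial))) := by
  unfold steinH
  rw [← Summable.tsum_sub (summable_steinH_terms hl j) (summable_steinH_terms hl (j + 1))]
  refine tsum_congr fun m => ?_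
  have e1 : j + 1 + m + 1 = (j + m + 1) + 1 := by omega
  have e2 : j + m + 2 = (j + m + 1) + 1 := by omega
  rw [e1, e2, Nat.factorial_succ (j + m + 1), Nat.factorial_succ j]
  have h1 : ((j + m + 1).factorial : ℝ) ≠ 0 := (factPos _).ne'
  have h2 : ((j : ℝ) + (m : ℝ) + 1 + 1) ≠ 0 := by positivity
  push_cast
  field_simp
  ring

lemma steinH_sub_nonneg {l : ℝ} (hl : 0 < l) (j : ℕ) : 0 ≤ steinH l j - steinH l (j + 1) := by
  rw [steinH_sub hl j]
  exact tsum_nonneg fun m => by positivity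

lemma fact_ratio_anti (c : ℕ) {j j' : ℕ} (h : j ≤ j') :
    ((j'.factorial : ℝ) / ((j' + c).factorial)) ≤ ((j.factorial : ℝ) / ((j + c).factorial)) := by
  have : Antitone (fun j : ℕ => ((j.factorial : ℝ) / ((j + c).factorial))) := by
    refine antitone_nat_of_succ_le fun j => ?_
    rw [div_le_div_iff₀ (factPos _) (factPos _)]
    have e1 : j + 1 + c = (j + c) + 1 := by omega
    rw [e1, Nat.factorial_succ (j + c), Nat.factorial_succ j]
    push_cast
    have hc : (0:ℝ) ≤ (c:ℝ) := Nat.cast_nonneg c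
    nlinarith [mul_pos (factPos j) (factPos (j + c)), hc]
  exact this h

lemma steinH_sub_mono {l : ℝ} (hl : 0 < l) {j j' : ℕ} (h : j ≤ j') :
    steinH l j' - steinH l (j' + 1) ≤ steinH l j - steinH l (j + 1) := by
  rw [steinH_sub hl j, steinH_sub hl j']
  refine Summable.tsum_le_tsum (fun m => ?_) (summable_steinH_sub hl j') (summable_steinH_sub hl j)
  have := fact_ratio_anti (m + 2) (h := h)
  have e1 : j + (m + 2) = j + m + 2 := by omega
  have e2 : j' + (m + 2) = j' + m + 2 := by omega
  rw [e1, e2] at this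
  gcongr

lemma steinH_rec {l : ℝ} (hl : 0 < l) (j : ℕ) :
    steinH l j = l / ((j:ℝ) + 1) * (1 + steinH l (j + 1)) := by
  unfold steinH
  rw [Summable.tsum_eq_zero_add (summable_steinH_terms hl j), mul_add, mul_one, ← tsum_mul_left]
  congr 1
  · rw [show j + 0 + 1 = j + 1 by omega, Nat.factorial_succ j]
    push_cast
    have h1 : ((j : ℝ) + 1) ≠ 0 := by positivity
    have h2 : ((j.factorial : ℝ)) ≠ 0 := (factPos _).ne'
    field_simp
  · refine tsum_congr fun m => ?_
    have e1 : j + (m + 1) + 1 = (j + m + 1) + 1 := by omega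
    have e2 : j + 1 + m + 1 = (j + m + 1) + 1 := by omega
    rw [e1, e2, Nat.factorial_succ j]
    have h1 : ((j : ℝ) + 1) ≠ 0 := by positivity
    push_cast
    field_simp
    ring

lemma cdf_eq_pmf_mul_steinG {l : ℝ} (hl : 0 < l) (j : ℕ) :
    poissonCDF l j = poissonPMF l j * steinG l j := by
  unfold poissonCDF steinG
  rw [Finset.mul_sum, ← Finset.sum_range_reflect (fun i => poissonPMF l i) (j + 1)]
  refine Finset.sum_congr rfl fun m hm => ?_
  rw [Finset.mem_range] at hm
  have hmj : m ≤ j := by omega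
  have e1 : j + 1 - 1 - m = j - m := by omega
  rw [e1]
  unfold _root_.poissonPMF
  have hfac : ((j - m).factorial : ℝ) * (j.descFactorial m : ℝ) = (j.factorial : ℝ) := by
    exact_mod_cast congrArg (Nat.cast (R := ℝ)) (Nat.factorial_mul_descFactorial hmj)
  have hpow : l ^ (j - m) * l ^ m = l ^ j := by
    rw [← pow_add]; congr 1; omega
  have h1 : ((j - m).factorial : ℝ) ≠ 0 := (factPos _).ne'
  have h2 : ((j).factorial : ℝ) ≠ 0 := (factPos _).ne'
  have h3 : l ^ m ≠ 0 := by positivity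
  field_simp
  linear_combination (j.factorial:ℝ) * hpow - l ^ j * hfac

lemma tail_eq_pmf_mul_steinH {l : ℝ} (hl : 0 < l) (j : ℕ) :
    poissonTail l (j + 1) = poissonPMF l j * steinH l j := by
  unfold poissonTail steinH
  rw [← tsum_mul_left]
  refine tsum_congr fun m => ?_
  unfold _root_.poissonPMF
  have e1 : j + 1 + m = j + m + 1 := by omega
  rw [e1]
  have hpow : l ^ (j + m + 1) = l ^ j * l ^ (m + 1) := by rw [← pow_add]; congr 1
  have h1 : ((j + m + 1).factorial : ℝ) ≠ 0 := (factPos _).ne'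
  have h2 : ((j).factorial : ℝ) ≠ 0 := (factPos _).ne'
  field_simp
  rw [hpow]

lemma consist {l : ℝ} (hl : 0 < l) {k : ℕ} (hk : 1 ≤ k) :
    poissonTail l k * steinG l (k - 1) = poissonCDF l (k - 1) * steinH l (k - 1) := by
  obtain ⟨m, rfl⟩ : ∃ m, k = m + 1 := ⟨k - 1, by omega⟩
  simp only [Nat.add_sub_cancel]
  rw [tail_eq_pmf_mul_steinH hl m, cdf_eq_pmf_mul_steinG hl m]
  ring

lemma poissonCDF_pos {l : ℝ} (hl : 0 < l) (j : ℕ) : 0 < poissonCDF l j := by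
  unfold poissonCDF
  exact Finset.sum_pos (fun i _ => poissonPMF_pos hl i) (by simp)

lemma steinG_pos {l : ℝ} (hl : 0 < l) (j : ℕ) : 0 < steinG l j := by
  unfold steinG
  refine Finset.sum_pos' (fun m hm => by positivity) ⟨0, by simp, by norm_num⟩

noncomputable def steinF (l : ℝ) (k : ℕ) (j : ℕ) : ℝ :=
  if j ≤ k then -(poissonTail l k * steinG l (j - 1)) / l
  else -(poissonCDF l (k - 1) * steinH l (j - 1)) / l

lemma steinF_left {l : ℝ} {k j : ℕ} (h : j ≤ k) :
    steinF l k j = -(poissonTail l k * steinG l (j - 1)) / l := if_pos h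

lemma steinF_right {l : ℝ} (hl : 0 < l) {k : ℕ} (hk : 1 ≤ k) {j : ℕ} (h : k ≤ j) :
    steinF l k j = -(poissonCDF l (k - 1) * steinH l (j - 1)) / l := by
  rcases eq_or_lt_of_le h with heq | hlt
  · subst heq
    rw [steinF_left le_rfl, consist hl hk]
  · exact if_neg (by omega)

lemma steinF_eq {l : ℝ} (hl : 0 < l) {k : ℕ} (hk : 1 ≤ k) (j : ℕ) :
    l * steinF l k (j + 1) - (j : ℝ) * steinF l k j
      = (if k ≤ j then (1 : ℝ) else 0) - poissonTail l k := by
  have hl' : l ≠ 0 := hl.ne'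
  rcases lt_or_ge j k with hjk | hjk
  · rw [if_neg (by omega), zero_sub]
    rw [steinF_left (by omega : j + 1 ≤ k), steinF_left (by omega : j ≤ k)]
    simp only [Nat.add_sub_cancel]
    cases j with
    | zero =>
      rw [steinG_zero]
      push_cast
      field_simp
      ring
    | succ i =>
      rw [steinG_succ l i, Nat.add_sub_cancel]
      push_cast
      field_simp
      ring
  · rw [if_pos hjk]
    have h1k : 1 ≤ j := le_trans hk hjk
    obtain ⟨i, rfl⟩ : ∃ i, j = i + 1 := ⟨j - 1, by omega⟩
    have hF : (1 : ℝ) - poissonTail l k = poissonCDF l (k - 1) := by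
      have := poissonCDF_add_tail l (k - 1)
      rw [show k - 1 + 1 = k by omega] at this
      linarith
    rw [hF]
    rw [steinF_right hl hk (by omega : k ≤ i + 1 + 1), steinF_right hl hk hjk]
    simp only [Nat.add_sub_cancel]
    rw [steinH_rec hl i]
    push_cast
    have h2 : ((i : ℝ) + 1) ≠ 0 := by positivity
    field_simp
    ring

lemma steinF_diff_bound {l : ℝ} (hl : 0 < l) {k : ℕ} (hk : 2 ≤ k) (j : ℕ) :
    |steinF l k (j + 1) - steinF l k j|
      ≤ max (poissonTail l k / l * (steinG l (k - 1) - steinG l (k - 2)))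
          (poissonCDF l (k - 1) / l * (steinH l (k - 1) - steinH l k)) := by
  have hT := poissonTail_pos hl k
  have hDL : 0 ≤ poissonTail l k / l * (steinG l (k - 1) - steinG l (k - 2)) := by
    have := steinG_sub_nonneg hl (k - 2)
    rw [show k - 2 + 1 = k - 1 by omega] at this
    have h0 : 0 ≤ poissonTail l k / l := by positivity
    exact mul_nonneg h0 this
  have hDR : 0 ≤ poissonCDF l (k - 1) / l * (steinH l (k - 1) - steinH l k) := by
    have h1 := steinH_sub_nonneg hl (k - 1)
    rw [show k - 1 + 1 = k by omega] at h1
    have h0' := (poissonCDF_pos hl (k - 1)).le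
    exact mul_nonneg (div_nonneg h0' hl.le) h1
  rcases Nat.eq_zero_or_pos j with rfl | hj
  · rw [steinF_left (by omega : 0 + 1 ≤ k), steinF_left (by omega : 0 ≤ k)]
    simp only [show 0 + 1 - 1 = 0 by omega, show 0 - 1 = 0 by omega, sub_self, abs_zero]
    exact le_max_of_le_left hDL
  rcases lt_or_ge j k with hjk | hjk
  · rw [steinF_left (by omega : j + 1 ≤ k), steinF_left (by omega : j ≤ k)]
    simp only [Nat.add_sub_cancel]
    obtain ⟨i, rfl⟩ : ∃ i, j = i + 1 := ⟨j - 1, by omega⟩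
    simp only [Nat.add_sub_cancel]
    have hsub : 0 ≤ steinG l (i + 1) - steinG l i := steinG_sub_nonneg hl i
    have habs : -(poissonTail l k * steinG l (i + 1)) / l - -(poissonTail l k * steinG l i) / l
        = -(poissonTail l k / l * (steinG l (i + 1) - steinG l i)) := by ring
    rw [habs, abs_neg, abs_of_nonneg (by positivity)]
    refine le_max_of_le_left ?_
    have hmono := steinG_sub_mono hl (by omega : i ≤ k - 2)
    rw [show k - 2 + 1 = k - 1 by omega] at hmono
    have h0 : 0 ≤ poissonTail l k / l := by positivity
    exact mul_le_mul_of_nonneg_left hmono h0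
  · rw [steinF_right hl (by omega) (by omega : k ≤ j + 1), steinF_right hl (by omega) hjk]
    simp only [Nat.add_sub_cancel]
    obtain ⟨i, rfl⟩ : ∃ i, j = i + 1 := ⟨j - 1, by omega⟩
    simp only [Nat.add_sub_cancel]
    have hsub : 0 ≤ steinH l i - steinH l (i + 1) := steinH_sub_nonneg hl i
    have hC := (poissonCDF_pos hl (k - 1)).le
    have habs : -(poissonCDF l (k - 1) * steinH l (i + 1)) / l - -(poissonCDF l (k - 1) * steinH l i) / l
        = poissonCDF l (k - 1) / l * (steinH l i - steinH l (i + 1)) := by ring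
    rw [habs, abs_of_nonneg (mul_nonneg (div_nonneg hC hl.le) hsub)]
    refine le_max_of_le_right ?_
    have hmono := steinH_sub_mono hl (by omega : k - 1 ≤ i)
    rw [show k - 1 + 1 = k by omega] at hmono
    exact mul_le_mul_of_nonneg_left hmono (div_nonneg hC hl.le)

lemma steinC1_mul_tail {l : ℝ} (hl : 0 < l) {k : ℕ} (hk : 2 ≤ k) :
    SteinC1 l k * poissonTail l k
      = max (poissonTail l k / l * (steinG l (k - 1) - steinG l (k - 2)))
          (poissonCDF l (k - 1) / l * (steinH l (k - 1) - steinH l k)) := by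
  obtain ⟨m, rfl⟩ : ∃ m, k = m + 2 := ⟨k - 2, by omega⟩
  have hT := poissonTail_pos hl (m + 2)
  have hT3 := poissonTail_pos hl (m + 3)
  have hπ : ∀ i : ℕ, 0 < poissonPMF l i := poissonPMF_pos hl
  have hF1 := poissonCDF_pos hl (m + 1)
  have hF0 := poissonCDF_pos hl m
  have hG1 := steinG_pos hl (m + 1)
  have hH1 : 0 < steinH l (m + 1) := by
    have h := hT
    rw [tail_eq_pmf_mul_steinH hl (m + 1)] at h
    nlinarith [hπ (m + 1)]
  have r1 : ((m:ℝ) + 2) * poissonPMF l (m + 2) = l * poissonPMF l (m + 1) := by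
    have := poissonPMF_succ l (m + 1)
    push_cast at this
    linarith
  have r2 : ((m:ℝ) + 1) * poissonPMF l (m + 1) = l * poissonPMF l m := poissonPMF_succ l m
  have g1 : poissonCDF l (m + 1) = poissonPMF l (m + 1) * steinG l (m + 1) := cdf_eq_pmf_mul_steinG hl (m + 1)
  have g0 : poissonCDF l m = poissonPMF l m * steinG l m := cdf_eq_pmf_mul_steinG hl m
  have t2 : poissonTail l (m + 2) = poissonPMF l (m + 1) * steinH l (m + 1) := tail_eq_pmf_mul_steinH hl (m + 1)
  have t3 : poissonTail l (m + 3) = poissonPMF l (m + 2) * steinH l (m + 2) := tail_eq_pmf_mul_steinH hl (m + 2)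
  have hcast : ((m + 2 : ℕ) : ℝ) = (m:ℝ) + 2 := by push_cast; ring
  have hl' : l ≠ 0 := hl.ne'
  have hp1 : poissonPMF l (m + 1) ≠ 0 := (hπ _).ne'
  have hp0 : poissonPMF l m ≠ 0 := (hπ _).ne'
  have hp2 : poissonPMF l (m + 2) ≠ 0 := (hπ _).ne'
  have hm2 : ((m:ℝ) + 2) ≠ 0 := by positivity
  have hm1 : ((m:ℝ) + 1) ≠ 0 := by positivity
  have e1 : poissonPMF l (m + 2) = l * poissonPMF l (m + 1) / ((m:ℝ) + 2) := by
    rw [← r1]; field_simp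
  have e0 : poissonPMF l m = ((m:ℝ) + 1) * poissonPMF l (m + 1) / l := by
    rw [eq_div_iff hl']; linarith [r2]
  unfold SteinC1 SteinC0
  simp only [show m + 2 - 1 = m + 1 by omega, show m + 2 - 2 = m by omega,
    show m + 2 + 1 = m + 3 by omega, hcast]
  set C0ex := poissonCDF l (m + 1) / (((m:ℝ) + 2) * poissonPMF l (m + 2)) with hC0ex
  set aex := poissonCDF l m * l / (((m:ℝ) + 2 - 1) * poissonCDF l (m + 1)) with haex
  set bex := poissonTail l (m + 3) * ((m:ℝ) + 2) / (poissonTail l (m + 2) * l) with hbex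
  have s1 : C0ex = steinG l (m + 1) / l := by
    rw [hC0ex, g1, r1, mul_comm l (poissonPMF l (m + 1)),
      mul_div_mul_left _ _ hp1]
  have sA : aex = steinG l m / steinG l (m + 1) := by
    rw [haex, g1, g0, show ((m:ℝ) + 2 - 1) = (m:ℝ) + 1 by ring, ← mul_assoc, r2]
    field_simp [hp0, hG1.ne']
  have sB : bex = steinH l (m + 2) / steinH l (m + 1) := by
    rw [hbex, t2, t3, e1]
    field_simp [hp1, hH1.ne']
  have eqL : C0ex * (1 - aex) * poissonTail l (m + 2)
      = poissonTail l (m + 2) / l * (steinG l (m + 1) - steinG l m) := by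
    rw [s1, sA]
    field_simp [hG1.ne']
  have eqR : C0ex * (1 - bex) * poissonTail l (m + 2)
      = poissonCDF l (m + 1) / l * (steinH l (m + 1) - steinH l (m + 2)) := by
    rw [s1, sB, t2, g1]
    field_simp [hH1.ne']
  have hC0pos : 0 ≤ C0ex := by
    rw [hC0ex]
    have := (hπ (m + 2)).le
    positivity
  have hC0T : 0 ≤ C0ex * poissonTail l (m + 2) := mul_nonneg hC0pos hT.le
  rcases le_total aex bex with h | h
  · have hle : C0ex * (1 - bex) * poissonTail l (m + 2)
        ≤ C0ex * (1 - aex) * poissonTail l (m + 2) := by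
      have h1b : (1 - bex) ≤ (1 - aex) := by linarith
      calc C0ex * (1 - bex) * poissonTail l (m + 2)
          = (C0ex * poissonTail l (m + 2)) * (1 - bex) := by ring
        _ ≤ (C0ex * poissonTail l (m + 2)) * (1 - aex) :=
            mul_le_mul_of_nonneg_left h1b hC0T
        _ = C0ex * (1 - aex) * poissonTail l (m + 2) := by ring
    rw [min_eq_left h, max_eq_left (by rw [← eqL, ← eqR]; exact hle)]
    exact eqL
  · have hle : C0ex * (1 - aex) * poissonTail l (m + 2)
        ≤ C0ex * (1 - bex) * poissonTail l (m + 2) := by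
      have h1b : (1 - aex) ≤ (1 - bex) := by linarith
      calc C0ex * (1 - aex) * poissonTail l (m + 2)
          = (C0ex * poissonTail l (m + 2)) * (1 - aex) := by ring
        _ ≤ (C0ex * poissonTail l (m + 2)) * (1 - bex) :=
            mul_le_mul_of_nonneg_left h1b hC0T
        _ = C0ex * (1 - bex) * poissonTail l (m + 2) := by ring
    rw [min_eq_right h, max_eq_right (by rw [← eqL, ← eqR]; exact hle)]
    exact eqR

/-- Poisson-binomial trials: `|P(W ≥ k)/F̄_μ(k) − 1| ≤ C1(μ,k)·μ₂`. -/
theorem poisson_binomial_md {Ω : Type*} [MeasurableSpace Ω]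
    (P : Measure Ω) [IsProbabilityMeasure P]
    (n : ℕ) (hn : 1 ≤ n) (p : Fin n → ℝ) (hp : ∀ i, p i ∈ Set.Ioo (0 : ℝ) 1)
    (X : Fin n → Ω → ℕ) (hXmeas : ∀ i, Measurable (X i))
    (hind : iIndepFun X P)
    (hber : ∀ i ω, X i ω ≤ 1)
    (hXp : ∀ i, (P {ω | X i ω = 1}).toReal = p i)
    (μ μ2 : ℝ) (hμ : μ = ∑ i, p i) (hμ2 : μ2 = ∑ i, (p i) ^ 2)
    (k : ℕ) (hk : 2 ≤ k) (hkμ : μ < k) :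
    |(P {ω | k ≤ ∑ i, X i ω}).toReal / poissonTail μ k - 1| ≤ SteinC1 μ k * μ2 := by
  classical
  have hnne : Nonempty (Fin n) := ⟨⟨0, hn⟩⟩
  have hl : 0 < μ := by
    rw [hμ]
    exact Finset.sum_pos (fun i _ => (hp i).1) Finset.univ_nonempty
  have hT := poissonTail_pos hl k
  set f : ℕ → ℝ := steinF μ k with hf
  set W : Ω → ℕ := fun ω => ∑ i, X i ω with hW
  set Wi : Fin n → Ω → ℕ := fun i ω => ∑ j ∈ Finset.univ.erase i, X j ω with hWi
  have hWmeas : Measurable W := Finset.measurable_sum _ (fun i _ => hXmeas i)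
  have hWimeas : ∀ i, Measurable (Wi i) := fun i => Finset.measurable_sum _ (fun j _ => hXmeas j)
  have hX01 : ∀ i ω, X i ω = 0 ∨ X i ω = 1 := fun i ω => by have := hber i ω; omega
  have hWsplit : ∀ i ω, W ω = X i ω + Wi i ω := fun i ω =>
    (Finset.add_sum_erase _ _ (Finset.mem_univ i)).symm
  have hWib : ∀ i ω, Wi i ω ≤ n := by
    intro i ω
    have h1 : Wi i ω ≤ (Finset.univ.erase i).card • 1 :=
      Finset.sum_le_card_nsmul _ _ 1 (fun j _ => hber j ω)
    have h2 : (Finset.univ.erase i).card ≤ n := by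
      calc (Finset.univ.erase i).card ≤ (Finset.univ : Finset (Fin n)).card := Finset.card_erase_le
        _ = n := by simp
    simpa using h1.trans (by simpa using h2)
  have hWb : ∀ ω, W ω ≤ n := by
    intro ω
    have h1 : W ω ≤ (Finset.univ : Finset (Fin n)).card • 1 :=
      Finset.sum_le_card_nsmul _ _ 1 (fun j _ => hber j ω)
    simpa using h1
  -- integrability of bounded composites
  have hbdd : ∀ (g : Ω → ℕ) (φ : ℕ → ℝ), Measurable g → (∀ ω, g ω ≤ n + 2) →
      Integrable (fun ω => φ (g ω)) P := by
    intro g φ hg hgb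
    refine Integrable.mono' (integrable_const (∑ m ∈ Finset.range (n + 3), |φ m|))
      ((measurable_from_top (f := φ)).comp hg).aestronglyMeasurable
      (Filter.Eventually.of_forall fun ω => ?_)
    rw [Real.norm_eq_abs]
    exact Finset.single_le_sum (f := fun m => |φ m|) (fun m _ => abs_nonneg _)
      (Finset.mem_range.mpr (by have := hgb ω; omega))
  have hbddX : ∀ (i : Fin n) (φ : ℕ → ℝ),
      Integrable (fun ω => (X i ω : ℝ) * φ (Wi i ω)) P := by
    intro i φ
    refine Integrable.mono' (integrable_const (∑ m ∈ Finset.range (n + 3), |φ m|))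
      ((measurable_from_top.comp (hXmeas i)).mul
        ((measurable_from_top (f := φ)).comp (hWimeas i))).aestronglyMeasurable
      (Filter.Eventually.of_forall fun ω => ?_)
    rw [Real.norm_eq_abs, abs_mul]
    have h1 : |(X i ω : ℝ)| ≤ 1 := by rcases hX01 i ω with h | h <;> simp [h]
    have h2 : |φ (Wi i ω)| ≤ ∑ m ∈ Finset.range (n + 3), |φ m| :=
      Finset.single_le_sum (f := fun m => |φ m|) (fun m _ => abs_nonneg _)
        (Finset.mem_range.mpr (by have := hWib i ω; omega))
    nlinarith [abs_nonneg (φ (Wi i ω)), abs_nonneg ((X i ω : ℝ))]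
  -- expectation of X i
  have hEX : ∀ i : Fin n, ∫ ω, (X i ω : ℝ) ∂P = p i := by
    intro i
    have hset : MeasurableSet {ω | X i ω = 1} := hXmeas i (measurableSet_singleton 1)
    have hptw : (fun ω => (X i ω : ℝ))
        = fun ω => Set.indicator {ω | X i ω = 1} (fun _ => (1 : ℝ)) ω := by
      funext ω
      rcases hX01 i ω with h | h
      · simp [Set.indicator_apply, Set.mem_setOf_eq, h]
      · simp [Set.indicator_apply, Set.mem_setOf_eq, h]
    rw [hptw, MeasureTheory.integral_indicator_const (1 : ℝ) hset, smul_eq_mul, mul_one]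
    exact hXp i
  -- independence
  have hkey : ∀ (i : Fin n) (φ : ℕ → ℝ),
      ∫ ω, (X i ω : ℝ) * φ (Wi i ω) ∂P = p i * ∫ ω, φ (Wi i ω) ∂P := by
    intro i φ
    have h2 := hind.indepFun_finset {i} (Finset.univ.erase i)
      (by simp) hXmeas
    have h3 : IndepFun (X i) (Wi i) P := by
      have h4 := h2.comp
        (φ := fun v : (({i} : Finset (Fin n)) → ℕ) => v ⟨i, Finset.mem_singleton_self i⟩)
        (ψ := fun v : ((j : ((Finset.univ.erase i : Finset (Fin n)) : Type)) → ℕ) => ∑ j, v j)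
        (_mγ := inferInstance) (_mγ' := inferInstance)
        (measurable_pi_apply _)
        (Finset.measurable_sum _ (fun j _ => measurable_pi_apply j))
      have hright : Wi i = fun ω => ∑ j : (Finset.univ.erase i : Finset (Fin n)), X (↑j) ω := by
        funext ω
        rw [hWi]
        exact (Finset.sum_coe_sort _ _).symm
      rw [hright]
      exact h4
    have hreal : IndepFun (fun ω => (X i ω : ℝ)) (fun ω => φ (Wi i ω)) P :=
      h3.comp measurable_from_top measurable_from_top
    have hint1 : Integrable (fun ω => (X i ω : ℝ)) P := by
      have := hbdd (X i) (fun m => (m : ℝ)) (hXmeas i) (fun ω => by have := hber i ω; omega)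
      exact this
    have hint2 : Integrable (fun ω => φ (Wi i ω)) P :=
      hbdd (Wi i) φ (hWimeas i) (fun ω => by have := hWib i ω; omega)
    have hmul := hreal.integral_mul_eq_mul_integral hint1.aestronglyMeasurable hint2.aestronglyMeasurable
    have hfun : ((fun ω => (X i ω : ℝ)) * fun ω => φ (Wi i ω))
        = fun ω => (X i ω : ℝ) * φ (Wi i ω) := rfl
    rw [hfun] at hmul
    rw [hmul, hEX i]
    -- the event set
  have hsetk : MeasurableSet {ω | k ≤ W ω} :=
    hWmeas ((Set.to_countable {m : ℕ | k ≤ m}).measurableSet)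
  have hA : ∫ ω, (if k ≤ W ω then (1 : ℝ) else 0) ∂P = (P {ω | k ≤ W ω}).toReal := by
    have hptw : (fun ω => if k ≤ W ω then (1 : ℝ) else 0)
        = fun ω => Set.indicator {ω | k ≤ W ω} (fun _ => (1 : ℝ)) ω := by
      funext ω
      by_cases h : k ≤ W ω <;> simp [Set.indicator_apply, Set.mem_setOf_eq, h]
    rw [hptw, MeasureTheory.integral_indicator_const (1 : ℝ) hsetk, smul_eq_mul, mul_one]
    rfl
  -- pointwise Stein identity, split over i
  have hptwise : ∀ ω, (if k ≤ W ω then (1 : ℝ) else 0) - poissonTail μ k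
      = ∑ i, (p i * f (Wi i ω + 1)
          + p i * ((X i ω : ℝ) * (f (Wi i ω + 2) - f (Wi i ω + 1)))
          - (X i ω : ℝ) * f (Wi i ω + 1)) := by
    intro ω
    have hstein := steinF_eq hl (by omega : 1 ≤ k) (W ω)
    rw [← hf] at hstein
    have hsum : ∀ i : Fin n, p i * f (W ω + 1) - (X i ω : ℝ) * f (W ω)
        = p i * f (Wi i ω + 1)
          + p i * ((X i ω : ℝ) * (f (Wi i ω + 2) - f (Wi i ω + 1)))
          - (X i ω : ℝ) * f (Wi i ω + 1) := by
      intro i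
      rcases hX01 i ω with h | h
      · have hw : W ω = Wi i ω := by rw [hWsplit i ω, h, zero_add]
        rw [hw, h]
        push_cast
        ring
      · have hw : W ω = Wi i ω + 1 := by rw [hWsplit i ω, h]; omega
        rw [hw, h, show Wi i ω + 1 + 1 = Wi i ω + 2 from rfl]
        push_cast
        ring
    have hlhs : (if k ≤ W ω then (1 : ℝ) else 0) - poissonTail μ k
        = ∑ i, (p i * f (W ω + 1) - (X i ω : ℝ) * f (W ω)) := by
      rw [Finset.sum_sub_distrib, ← Finset.sum_mul, ← hμ]
      have hc : (∑ i, ((X i ω : ℝ))) = ((W ω : ℕ) : ℝ) := by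
        rw [hW]
        push_cast
        rfl
      rw [← Finset.sum_mul, hc, ← hstein]
    rw [hlhs]
    exact Finset.sum_congr rfl fun i _ => hsum i
  -- integrate
  have hint1 : ∀ i : Fin n, Integrable (fun ω => p i * f (Wi i ω + 1)) P := by
    intro i
    exact hbdd (Wi i) (fun m => p i * f (m + 1)) (hWimeas i) (fun ω => by have := hWib i ω; omega)
  have hint2 : ∀ i : Fin n,
      Integrable (fun ω => p i * ((X i ω : ℝ) * (f (Wi i ω + 2) - f (Wi i ω + 1)))) P := by
    intro i
    exact (hbddX i (fun m => f (m + 2) - f (m + 1))).const_mul (p i)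
  have hint3 : ∀ i : Fin n, Integrable (fun ω => (X i ω : ℝ) * f (Wi i ω + 1)) P := by
    intro i
    exact hbddX i (fun m => f (m + 1))
  have hint4 : ∀ i : Fin n, Integrable (fun ω => f (Wi i ω + 2) - f (Wi i ω + 1)) P := by
    intro i
    exact hbdd (Wi i) (fun m => f (m + 2) - f (m + 1)) (hWimeas i) (fun ω => by have := hWib i ω; omega)
  have hintsummand : ∀ i : Fin n, Integrable (fun ω =>
      p i * f (Wi i ω + 1)
        + p i * ((X i ω : ℝ) * (f (Wi i ω + 2) - f (Wi i ω + 1)))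
        - (X i ω : ℝ) * f (Wi i ω + 1)) P := by
    intro i
    exact ((hint1 i).add (hint2 i)).sub (hint3 i)
  have hintegrand : Integrable (fun ω => (if k ≤ W ω then (1 : ℝ) else 0)) P :=
    hbdd W (fun m => if k ≤ m then (1 : ℝ) else 0) hWmeas (fun ω => by have := hWb ω; omega)
  -- per-i integral
  have hper : ∀ i : Fin n,
      ∫ ω, (p i * f (Wi i ω + 1)
        + p i * ((X i ω : ℝ) * (f (Wi i ω + 2) - f (Wi i ω + 1)))
        - (X i ω : ℝ) * f (Wi i ω + 1)) ∂P
      = (p i) ^ 2 * ∫ ω, (f (Wi i ω + 2) - f (Wi i ω + 1)) ∂P := by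
    intro i
    have hint12 : Integrable (fun ω => p i * f (Wi i ω + 1)
        + p i * ((X i ω : ℝ) * (f (Wi i ω + 2) - f (Wi i ω + 1)))) P := (hint1 i).add (hint2 i)
    rw [integral_sub hint12 (hint3 i),
      integral_add (hint1 i) (hint2 i), integral_const_mul, integral_const_mul]
    have hk1 := hkey i (fun m => f (m + 2) - f (m + 1))
    have hk2 := hkey i (fun m => f (m + 1))
    rw [hk1, hk2]
    ring
  -- main identity
  have hmain : (P {ω | k ≤ W ω}).toReal - poissonTail μ k
      = ∑ i, (p i) ^ 2 * ∫ ω, (f (Wi i ω + 2) - f (Wi i ω + 1)) ∂P := by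
    have h1 : ∫ ω, ((if k ≤ W ω then (1 : ℝ) else 0) - poissonTail μ k) ∂P
        = (P {ω | k ≤ W ω}).toReal - poissonTail μ k := by
      rw [integral_sub hintegrand (integrable_const _), hA, integral_const, smul_eq_mul]
      simp
    rw [← h1, integral_congr_ae (Filter.Eventually.of_forall hptwise),
      integral_finset_sum _ (fun i _ => hintsummand i)]
    exact Finset.sum_congr rfl fun i _ => hper i
  -- bound each integral
  have hbound : ∀ i : Fin n, |∫ ω, (f (Wi i ω + 2) - f (Wi i ω + 1)) ∂P|
      ≤ SteinC1 μ k * poissonTail μ k := by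
    intro i
    have h1 : ‖∫ ω, (f (Wi i ω + 2) - f (Wi i ω + 1)) ∂P‖
        ≤ (SteinC1 μ k * poissonTail μ k) * (P Set.univ).toReal := by
      refine norm_integral_le_of_norm_le_const (Filter.Eventually.of_forall fun ω => ?_)
      rw [Real.norm_eq_abs]
      have h2 := steinF_diff_bound hl hk (Wi i ω + 1)
      rw [show Wi i ω + 1 + 1 = Wi i ω + 2 from rfl] at h2
      rw [steinC1_mul_tail hl hk, hf]
      exact h2
    simpa [measure_univ] using h1
  -- conclude
  have hgoal : |(P {ω | k ≤ W ω}).toReal - poissonTail μ k|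
      ≤ SteinC1 μ k * μ2 * poissonTail μ k := by
    rw [hmain]
    calc |∑ i, (p i) ^ 2 * ∫ ω, (f (Wi i ω + 2) - f (Wi i ω + 1)) ∂P|
        ≤ ∑ i, |(p i) ^ 2 * ∫ ω, (f (Wi i ω + 2) - f (Wi i ω + 1)) ∂P| :=
          Finset.abs_sum_le_sum_abs _ _
      _ ≤ ∑ i, (p i) ^ 2 * (SteinC1 μ k * poissonTail μ k) := by
          refine Finset.sum_le_sum fun i _ => ?_
          rw [abs_mul, abs_of_nonneg (sq_nonneg (p i))]
          exact mul_le_mul_of_nonneg_left (hbound i) (sq_nonneg (p i))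
      _ = SteinC1 μ k * μ2 * poissonTail μ k := by
          rw [← Finset.sum_mul, ← hμ2]
          ring
  have hW' : {ω | k ≤ ∑ i, X i ω} = {ω | k ≤ W ω} := rfl
  rw [hW']
  have hdiv : (P {ω | k ≤ W ω}).toReal / poissonTail μ k - 1
      = ((P {ω | k ≤ W ω}).toReal - poissonTail μ k) / poissonTail μ k := by
    field_simp
  rw [hdiv, abs_div, abs_of_pos hT, div_le_iff₀ hT]
  calc |(P {ω | k ≤ W ω}).toReal - poissonTail μ k|
      ≤ SteinC1 μ k * μ2 * poissonTail μ k := hgoal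
    _ = SteinC1 μ k * μ2 * poissonTail μ k := rfl
end

section
/- Let λ > 0, let k ≥ 2 be an integer, let f be the solution of the Poisson–Stein equation for the indicator of [k,∞), and let Y ~ Pn(λ). Then E[Δf(Y + 1)] = −(π_{k−2}(λ) − π_{k−1}(λ))/2. -/
open MeasureTheory ProbabilityTheory Finset Real

open Filter

section BASE
variable {l : ℝ}

lemma pmf_eq (j : ℕ) : poissonPMF l j = Real.exp (-l) * (l ^ j / (Nat.factorial j)) := by
  rw [_root_.poissonPMF, mul_div_assoc]

lemma pmf_pos (hl : 0 < l) (j : ℕ) : 0 < poissonPMF l j := by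
  rw [_root_.poissonPMF]
  positivity

lemma pmf_nonneg (hl : 0 < l) (j : ℕ) : 0 ≤ poissonPMF l j := (pmf_pos hl j).le

lemma hasSum_pow_div_factorial : HasSum (fun n : ℕ => l ^ n / (Nat.factorial n)) (Real.exp l) := by
  have h := (Real.summable_pow_div_factorial l).hasSum
  have : Real.exp l = ∑' n : ℕ, l ^ n / (Nat.factorial n) := by
    rw [Real.exp_eq_exp_ℝ, NormedSpace.exp_eq_tsum_div]
  rwa [this]

lemma hasSum_pmf : HasSum (poissonPMF l) 1 := by
  have h := (hasSum_pow_div_factorial (l := l)).mul_left (Real.exp (-l))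
  have h2 : Real.exp (-l) * Real.exp l = 1 := by
    rw [← Real.exp_add, neg_add_cancel, Real.exp_zero]
  rw [h2] at h
  exact h.congr_fun fun n => pmf_eq n

lemma summable_pmf : Summable (poissonPMF l) := hasSum_pmf.summable

lemma summable_shift (n : ℕ) : Summable (fun i => poissonPMF l (n + i)) :=
  summable_pmf.comp_injective (add_right_injective n)

lemma tail_nonneg (hl : 0 < l) (n : ℕ) : 0 ≤ poissonTail l n :=
  tsum_nonneg fun i => pmf_nonneg hl _

lemma cdf_add_tail (j : ℕ) : poissonCDF l j + poissonTail l (j + 1) = 1 := by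
  have h := Summable.sum_add_tsum_nat_add (f := poissonPMF l) (j + 1) summable_pmf
  rw [hasSum_pmf.tsum_eq] at h
  rw [poissonCDF, poissonTail]
  rw [show (∑' i : ℕ, poissonPMF l (j + 1 + i)) = ∑' i : ℕ, poissonPMF l (i + (j + 1)) from
    tsum_congr fun i => by rw [add_comm]]
  exact h

lemma tail_succ (n : ℕ) : poissonTail l n = poissonPMF l n + poissonTail l (n + 1) := by
  rw [poissonTail, Summable.tsum_eq_zero_add (summable_shift n)]
  rw [add_zero]
  congr 1
  rw [poissonTail]
  exact tsum_congr fun i => by rw [show n + (i + 1) = n + 1 + i by omega]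

lemma cdf_nonneg (hl : 0 < l) (j : ℕ) : 0 ≤ poissonCDF l j :=
  Finset.sum_nonneg fun i _ => pmf_nonneg hl i

lemma cdf_le_one (hl : 0 < l) (j : ℕ) : poissonCDF l j ≤ 1 := by
  have := cdf_add_tail (l := l) j
  have := tail_nonneg hl (j + 1)
  linarith

lemma cdf_mono (hl : 0 < l) {j j' : ℕ} (h : j ≤ j') : poissonCDF l j ≤ poissonCDF l j' := by
  apply Finset.sum_le_sum_of_subset_of_nonneg (Finset.range_subset_range.2 (by omega))
  exact fun i _ _ => pmf_nonneg hl i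

lemma tail_le_one (hl : 0 < l) (n : ℕ) : poissonTail l n ≤ 1 := by
  rcases n with _ | m
  · have h0 := tail_succ (l := l) 0
    have := cdf_add_tail (l := l) 0
    have h1 : poissonCDF l 0 = poissonPMF l 0 := by simp [poissonCDF]
    have := tail_nonneg hl 1
    have := pmf_nonneg hl 0
    linarith [show poissonTail l 0 = poissonPMF l 0 + poissonTail l 1 from h0]
  · have := cdf_add_tail (l := l) m
    have := cdf_nonneg hl m
    linarith

lemma tail_le (hl : 0 < l) (n : ℕ) : poissonTail l n ≤ l ^ n / (Nat.factorial n) := by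
  have hb : ∀ i : ℕ, poissonPMF l (n + i) ≤ (l ^ n / (Nat.factorial n)) * poissonPMF l i := by
    intro i
    rw [pmf_eq, pmf_eq]
    have hfac : (Nat.factorial n : ℝ) * (Nat.factorial i) ≤ (Nat.factorial (n + i)) := by
      exact_mod_cast Nat.le_of_dvd (Nat.factorial_pos _)
        (Nat.factorial_mul_factorial_dvd_factorial_add n i)
    have h1 : l ^ (n + i) / (Nat.factorial (n + i) : ℝ) ≤
        l ^ n / (Nat.factorial n) * (l ^ i / (Nat.factorial i)) := by
      rw [pow_add, div_mul_div_comm]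
      apply div_le_div_of_nonneg_left (by positivity) (by positivity)
      · exact hfac
    calc Real.exp (-l) * (l ^ (n + i) / (Nat.factorial (n + i))) ≤
        Real.exp (-l) * (l ^ n / (Nat.factorial n) * (l ^ i / (Nat.factorial i))) := by
          exact mul_le_mul_of_nonneg_left h1 (Real.exp_pos _).le
      _ = l ^ n / (Nat.factorial n) * (Real.exp (-l) * (l ^ i / (Nat.factorial i))) := by ring
  have hs : HasSum (fun i => (l ^ n / (Nat.factorial n)) * poissonPMF l i)
      ((l ^ n / (Nat.factorial n)) * 1) := hasSum_pmf.mul_left _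
  calc poissonTail l n ≤ ∑' i, (l ^ n / (Nat.factorial n)) * poissonPMF l i :=
        Summable.tsum_le_tsum hb (summable_shift n) hs.summable
    _ = l ^ n / (Nat.factorial n) := by rw [hs.tsum_eq, mul_one]

lemma pmf_succ (hl : 0 < l) (j : ℕ) :
    ((j : ℝ) + 1) * poissonPMF l (j + 1) = l * poissonPMF l j := by
  rw [_root_.poissonPMF, _root_.poissonPMF, Nat.factorial_succ]
  have h1 : (Nat.factorial j : ℝ) ≠ 0 := Nat.cast_ne_zero.2 (Nat.factorial_ne_zero j)
  push_cast
  field_simp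
  ring

lemma tsum_ite_tail (hl : 0 < l) (a : ℕ) :
    ∑' m : ℕ, (if a ≤ m then poissonPMF l m else 0) = poissonTail l a := by
  have hsum : Summable (fun m => if a ≤ m then poissonPMF l m else 0) := by
    refine Summable.of_nonneg_of_le (fun m => ?_) (fun m => ?_) (summable_pmf (l := l))
    · by_cases h : a ≤ m <;> simp [h, pmf_nonneg hl m]
    · by_cases h : a ≤ m <;> simp [h, pmf_nonneg hl m]
  have h := Summable.sum_add_tsum_nat_add (f := fun m => if a ≤ m then poissonPMF l m else 0) a hsum
  try simp only at h
  rw [Finset.sum_eq_zero (fun i hi => by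
    rw [if_neg]; rw [Finset.mem_range] at hi; omega), zero_add] at h
  rw [← h, poissonTail]
  exact tsum_congr fun i => by rw [if_pos (by omega), add_comm]
end BASE

noncomputable def sg (l : ℝ) (k : ℕ) (i : ℕ) : ℝ :=
  (if k ≤ i then (1 : ℝ) else 0) - poissonTail l k

noncomputable def sG (l : ℝ) (k : ℕ) (j : ℕ) : ℝ :=
  ∑ i ∈ Finset.range (j + 1), poissonPMF l i * sg l k i

variable {l : ℝ} {k : ℕ} {f : ℕ → ℝ}

lemma sG_rec (j : ℕ) : sG l k (j + 1) = sG l k j + poissonPMF l (j + 1) * sg l k (j + 1) :=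
  Finset.sum_range_succ _ _

lemma sg_abs_le_one (hl : 0 < l) (i : ℕ) : |sg l k i| ≤ 1 := by
  rw [sg]
  have h1 := tail_nonneg hl k
  have h2 := tail_le_one hl k
  by_cases h : k ≤ i <;> simp [h] <;> [skip; skip] <;> rw [abs_le] <;> constructor <;> linarith

lemma stein_key (hl : 0 < l) (hf : IsSteinSolution l k f) (j : ℕ) :
    l * (poissonPMF l j * f (j + 1)) = sG l k j := by
  induction j with
  | zero =>
      have h := hf.2 0
      have h' : l * f 1 = sg l k 0 := by
        rw [sg]; push_cast at h; linarith
      have hG0 : sG l k 0 = poissonPMF l 0 * sg l k 0 := by simp [sG]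
      rw [hG0, show l * (poissonPMF l 0 * f (0 + 1)) = poissonPMF l 0 * (l * f 1) by ring, h']
  | succ j ih =>
      have h := hf.2 (j + 1)
      rw [← sg] at h
      have hp := pmf_succ hl j
      rw [sG_rec]
      push_cast at h
      -- l * f (j+2) = ((j:ℝ)+1) * f (j+1) + sg l k (j+1)
      have h2 : l * f (j + 2) = ((j : ℝ) + 1) * f (j + 1) + sg l k (j + 1) := by linarith
      calc l * (poissonPMF l (j + 1) * f (j + 2))
          = poissonPMF l (j + 1) * (l * f (j + 2)) := by ring
        _ = poissonPMF l (j + 1) * (((j : ℝ) + 1) * f (j + 1) + sg l k (j + 1)) := by rw [h2]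
        _ = (((j : ℝ) + 1) * poissonPMF l (j + 1)) * f (j + 1)
            + poissonPMF l (j + 1) * sg l k (j + 1) := by ring
        _ = l * (poissonPMF l j * f (j + 1)) + poissonPMF l (j + 1) * sg l k (j + 1) := by
            rw [hp]; ring
        _ = sG l k j + poissonPMF l (j + 1) * sg l k (j + 1) := by rw [ih]

lemma s_eq (hl : 0 < l) (hf : IsSteinSolution l k f) (j : ℕ) :
    poissonPMF l j * (f (j + 2) - f (j + 1)) =
      (((j : ℝ) + 1) * sG l k (j + 1) - l * sG l k j) / l ^ 2 := by
  have h1 := stein_key hl hf (j + 1)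
  have h2 := stein_key hl hf j
  have hp := pmf_succ hl j
  rw [eq_div_iff (by positivity : (l : ℝ) ^ 2 ≠ 0)]
  push_cast at h1
  linear_combination ((j : ℝ) + 1) * h1 - (l * f (j + 2)) * hp - l * h2

lemma sG_lt (hl : 0 < l) {j : ℕ} (hj : j + 1 ≤ k) :
    sG l k j = -(poissonTail l k * poissonCDF l j) := by
  have h : ∀ i ∈ Finset.range (j + 1), poissonPMF l i * sg l k i
      = -(poissonTail l k * poissonPMF l i) := by
    intro i hi
    rw [Finset.mem_range] at hi
    rw [sg, if_neg (by omega)]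
    ring
  rw [sG, Finset.sum_congr rfl h, poissonCDF, Finset.mul_sum, ← Finset.sum_neg_distrib]

lemma sG_ge (hl : 0 < l) (hk : 1 ≤ k) {j : ℕ} (hj : k ≤ j) :
    sG l k j = -(poissonCDF l (k - 1) * poissonTail l (j + 1)) := by
  have hsplit := Finset.sum_range_add_sum_Ico (fun i => poissonPMF l i * sg l k i)
    (show k ≤ j + 1 by omega)
  have hsplit2 := Finset.sum_range_add_sum_Ico (poissonPMF l) (show k ≤ j + 1 by omega)
  have h1 : ∑ i ∈ Finset.range k, poissonPMF l i * sg l k i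
      = -(poissonTail l k * poissonCDF l (k - 1)) := by
    have h0 := sG_lt hl (show (k - 1) + 1 ≤ k by omega)
    rw [sG, show k - 1 + 1 = k by omega] at h0
    exact h0
  have h2 : ∑ i ∈ Finset.Ico k (j + 1), poissonPMF l i * sg l k i
      = (1 - poissonTail l k) * ∑ i ∈ Finset.Ico k (j + 1), poissonPMF l i := by
    rw [Finset.mul_sum]
    refine Finset.sum_congr rfl fun i hi => ?_
    rw [Finset.mem_Ico] at hi
    rw [sg, if_pos hi.1]
    ring
  have h3 : ∑ i ∈ Finset.Ico k (j + 1), poissonPMF l i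
      = poissonCDF l j - poissonCDF l (k - 1) := by
    rw [poissonCDF, poissonCDF, show k - 1 + 1 = k by omega]
    linarith [hsplit2]
  have hT : poissonCDF l (k - 1) + poissonTail l k = 1 := by
    have := cdf_add_tail (l := l) (k - 1)
    rwa [show k - 1 + 1 = k by omega] at this
  have hTj : poissonCDF l j + poissonTail l (j + 1) = 1 := cdf_add_tail j
  have hG : sG l k j = -(poissonTail l k * poissonCDF l (k - 1))
      + (1 - poissonTail l k) * (poissonCDF l j - poissonCDF l (k - 1)) := by
    rw [sG, ← hsplit, h1, h2, h3]
  linear_combination hG + (-(poissonCDF l j)) * hT + poissonCDF l (k - 1) * hTj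

lemma sG_bound (hl : 0 < l) (hk : 1 ≤ k) (j : ℕ) :
    |sG l k j| ≤ poissonTail l (j + 1) := by
  by_cases h : k ≤ j
  · rw [sG_ge hl hk h, abs_neg, abs_mul]
    have h1 := cdf_nonneg hl (k - 1)
    have h2 := cdf_le_one hl (k - 1)
    have h3 := tail_nonneg hl (j + 1)
    rw [abs_of_nonneg h1, abs_of_nonneg h3]
    nlinarith
  · rw [sG_lt hl (by omega), abs_neg, abs_mul]
    have h1 := tail_nonneg hl k
    have h2 := cdf_nonneg hl j
    have h3 := cdf_le_one hl j
    have hmono := cdf_mono hl (show j ≤ k - 1 by omega)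
    have hT : poissonCDF l (k - 1) + poissonTail l k = 1 := by
      have := cdf_add_tail (l := l) (k - 1)
      rwa [show k - 1 + 1 = k by omega] at this
    have hTj : poissonCDF l j + poissonTail l (j + 1) = 1 := cdf_add_tail j
    rw [abs_of_nonneg h1, abs_of_nonneg h2]
    nlinarith

lemma sG_bound' (hl : 0 < l) (hk : 1 ≤ k) (j : ℕ) :
    |sG l k j| ≤ l ^ (j + 1) / (Nat.factorial (j + 1)) :=
  (sG_bound hl hk j).trans (tail_le hl (j + 1))

lemma partial_sum (l : ℝ) (k : ℕ) (N : ℕ) :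
    ∑ j ∈ Finset.range N, (((j : ℝ) + 1) * sG l k (j + 1) - l * sG l k j)
      = ∑ i ∈ Finset.range (N + 1), poissonPMF l i * sg l k i *
          (((N : ℝ) * ((N : ℝ) + 1) - (i : ℝ) * ((i : ℝ) - 1)) / 2 - l * ((N : ℝ) - (i : ℝ))) := by
  induction N with
  | zero => simp
  | succ N ih =>
      have e1 := Finset.sum_range_succ
        (fun j => (((j : ℝ) + 1) * sG l k (j + 1) - l * sG l k j)) N
      have e2 := Finset.sum_range_succ (fun i => poissonPMF l i * sg l k i *
          ((((N + 1 : ℕ) : ℝ) * (((N + 1 : ℕ) : ℝ) + 1) - (i : ℝ) * ((i : ℝ) - 1)) / 2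
            - l * (((N + 1 : ℕ) : ℝ) - (i : ℝ)))) (N + 1)
      have hsplit : ∑ i ∈ Finset.range (N + 1), poissonPMF l i * sg l k i *
            ((((N + 1 : ℕ) : ℝ) * (((N + 1 : ℕ) : ℝ) + 1) - (i : ℝ) * ((i : ℝ) - 1)) / 2
              - l * (((N + 1 : ℕ) : ℝ) - (i : ℝ)))
          = (∑ i ∈ Finset.range (N + 1), poissonPMF l i * sg l k i *
              (((N : ℝ) * ((N : ℝ) + 1) - (i : ℝ) * ((i : ℝ) - 1)) / 2
                - l * ((N : ℝ) - (i : ℝ))))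
            + (((N : ℝ) + 1) - l) * sG l k N := by
        rw [show sG l k N = ∑ i ∈ Finset.range (N + 1), poissonPMF l i * sg l k i from rfl]
        rw [Finset.mul_sum, ← Finset.sum_add_distrib]
        refine Finset.sum_congr rfl fun i _ => ?_
        push_cast
        ring
      have hrec := sG_rec (l := l) (k := k) N
      linear_combination (norm := (push_cast; ring1)) e1 + ih - e2 - hsplit
        + (((N : ℝ) + 1)) * hrec - (((N : ℝ) + 1)) * (poissonPMF l (N + 1) * sg l k (N + 1)) * 0

lemma sum_s_eq (hl : 0 < l) (hf : IsSteinSolution l k f) (N : ℕ) :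
    ∑ j ∈ Finset.range N, poissonPMF l j * (f (j + 2) - f (j + 1))
      = ((((N : ℝ) * ((N : ℝ) + 1)) / 2 - l * (N : ℝ)) * sG l k N
          + ∑ i ∈ Finset.range (N + 1), poissonPMF l i * sg l k i *
              (l * (i : ℝ) - (i : ℝ) * ((i : ℝ) - 1) / 2)) / l ^ 2 := by
  rw [Finset.sum_congr rfl (fun j _ => s_eq hl hf j), ← Finset.sum_div, partial_sum]
  congr 1
  rw [show sG l k N = ∑ i ∈ Finset.range (N + 1), poissonPMF l i * sg l k i from rfl]
  rw [Finset.mul_sum, ← Finset.sum_add_distrib]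
  exact Finset.sum_congr rfl fun i _ => by ring

lemma pmf_le (hl : 0 < l) (j : ℕ) : poissonPMF l j ≤ l ^ j / (Nat.factorial j) := by
  rw [pmf_eq]
  have hexp : Real.exp (-l) ≤ 1 := by
    calc Real.exp (-l) ≤ Real.exp 0 := Real.exp_le_exp.mpr (by linarith)
      _ = 1 := Real.exp_zero
  have h0 : (0 : ℝ) ≤ l ^ j / (Nat.factorial j) := by positivity
  nlinarith

lemma summable_quad (hl : 0 < l) :
    Summable (fun i : ℕ => ((i : ℝ) ^ 2 + (i : ℝ) + 1) * (l ^ i / (Nat.factorial i))) := by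
  have h4 := Real.summable_pow_div_factorial (4 * l)
  have h2 := Real.summable_pow_div_factorial (2 * l)
  have h1 := Real.summable_pow_div_factorial l
  have hb := (h4.add h2).add h1
  refine Summable.of_nonneg_of_le (fun i => by positivity) (fun i => ?_) hb
  have hi2 : (i : ℝ) ≤ 2 ^ i := by
    exact_mod_cast (Nat.lt_two_pow_self : i < 2 ^ i).le
  have hi4 : (i : ℝ) ^ 2 ≤ 4 ^ i := by
    have : ((i : ℝ)) ^ 2 ≤ ((2 : ℝ) ^ i) ^ 2 := by
      apply pow_le_pow_left₀ (Nat.cast_nonneg i) hi2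
    calc ((i : ℝ)) ^ 2 ≤ ((2 : ℝ) ^ i) ^ 2 := this
      _ = 4 ^ i := by rw [← pow_mul, mul_comm, pow_mul]; norm_num
  have hfac : (0 : ℝ) < (Nat.factorial i : ℝ) := by exact_mod_cast Nat.factorial_pos i
  have hlp : (0 : ℝ) ≤ l ^ i := by positivity
  calc ((i : ℝ) ^ 2 + (i : ℝ) + 1) * (l ^ i / (Nat.factorial i))
      ≤ ((4 : ℝ) ^ i + 2 ^ i + 1) * (l ^ i / (Nat.factorial i)) := by
        apply mul_le_mul_of_nonneg_right (by linarith) (by positivity)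
    _ = (4 * l) ^ i / (Nat.factorial i) + (2 * l) ^ i / (Nat.factorial i)
        + l ^ i / (Nat.factorial i) := by
        rw [mul_pow, mul_pow]; field_simp

lemma summable_of_quad_bound (hl : 0 < l) (h : ℕ → ℝ) (C : ℝ)
    (hb : ∀ i, |h i| ≤ C * (((i : ℝ) ^ 2 + (i : ℝ) + 1) * (l ^ i / (Nat.factorial i)))) :
    Summable h := by
  refine summable_abs_iff.mp ?_
  exact Summable.of_nonneg_of_le (fun i => abs_nonneg _) hb ((summable_quad hl).mul_left C)

lemma quad_pmf_bound (hl : 0 < l) (i : ℕ) (q : ℝ)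
    (hq : |q| ≤ (i : ℝ) ^ 2 + (i : ℝ) + 1) :
    |poissonPMF l i * sg l k i * q| ≤ ((i : ℝ) ^ 2 + (i : ℝ) + 1) * (l ^ i / (Nat.factorial i)) := by
  rw [abs_mul, abs_mul]
  have h1 := sg_abs_le_one (k := k) hl i
  have h2 : |poissonPMF l i| = poissonPMF l i := abs_of_pos (pmf_pos hl i)
  have h3 := pmf_le hl i
  have h4 : (0 : ℝ) ≤ l ^ i / (Nat.factorial i) := by positivity
  have h5 := pmf_pos hl i
  have h6 : (0 : ℝ) ≤ |q| := abs_nonneg q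
  calc |poissonPMF l i| * |sg l k i| * |q| = poissonPMF l i * |sg l k i| * |q| := by rw [h2]
    _ ≤ poissonPMF l i * 1 * |q| :=
        mul_le_mul_of_nonneg_right (mul_le_mul_of_nonneg_left h1 h5.le) h6
    _ = poissonPMF l i * |q| := by ring
    _ ≤ (l ^ i / (Nat.factorial i)) * ((i : ℝ) ^ 2 + (i : ℝ) + 1) := mul_le_mul h3 hq h6 h4
    _ = ((i : ℝ) ^ 2 + (i : ℝ) + 1) * (l ^ i / (Nat.factorial i)) := by ring

lemma summable_u (hl : 0 < l) : Summable
    (fun i : ℕ => poissonPMF l i * sg l k i * (l * (i : ℝ) - (i : ℝ) * ((i : ℝ) - 1) / 2)) := by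
  refine summable_of_quad_bound hl _ (l + 1) fun i => ?_
  have hq : |l * (i : ℝ) - (i : ℝ) * ((i : ℝ) - 1) / 2|
      ≤ (l + 1) * ((i : ℝ) ^ 2 + (i : ℝ) + 1) := by
    rw [abs_le]
    have := Nat.cast_nonneg (α := ℝ) i
    constructor <;> nlinarith
  have h2 : |poissonPMF l i * sg l k i * (l * (i : ℝ) - (i : ℝ) * ((i : ℝ) - 1) / 2)|
      ≤ |poissonPMF l i * sg l k i| * ((l + 1) * ((i : ℝ) ^ 2 + (i : ℝ) + 1)) := by
    rw [abs_mul]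
    exact mul_le_mul_of_nonneg_left hq (abs_nonneg _)
  refine h2.trans ?_
  have h3 : |poissonPMF l i * sg l k i| ≤ l ^ i / (Nat.factorial i) := by
    rw [abs_mul]
    have h1 := sg_abs_le_one (k := k) hl i
    have h2' : |poissonPMF l i| = poissonPMF l i := abs_of_pos (pmf_pos hl i)
    have h3' := pmf_le hl i
    have h5 := pmf_pos hl i
    nlinarith [abs_nonneg (sg l k i)]
  have h4 : (0 : ℝ) ≤ (l + 1) * ((i : ℝ) ^ 2 + (i : ℝ) + 1) := by positivity
  calc |poissonPMF l i * sg l k i| * ((l + 1) * ((i : ℝ) ^ 2 + (i : ℝ) + 1))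
      ≤ (l ^ i / (Nat.factorial i)) * ((l + 1) * ((i : ℝ) ^ 2 + (i : ℝ) + 1)) :=
        mul_le_mul_of_nonneg_right h3 h4
    _ = (l + 1) * (((i : ℝ) ^ 2 + (i : ℝ) + 1) * (l ^ i / (Nat.factorial i))) := by ring

lemma abs_s_le (hl : 0 < l) (hk : 1 ≤ k) (hf : IsSteinSolution l k f) (j : ℕ) :
    |poissonPMF l j * (f (j + 2) - f (j + 1))| ≤ 2 * (l ^ j / (Nat.factorial j)) := by
  rw [s_eq hl hf j, abs_div, abs_of_pos (pow_pos hl 2)]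
  rw [div_le_iff₀ (pow_pos hl 2)]
  have hG1 := sG_bound' hl hk (j + 1)
  have hG0 := sG_bound' hl hk j
  have habs : |((j : ℝ) + 1) * sG l k (j + 1) - l * sG l k j|
      ≤ ((j : ℝ) + 1) * |sG l k (j + 1)| + l * |sG l k j| := by
    calc |((j : ℝ) + 1) * sG l k (j + 1) - l * sG l k j|
        ≤ |((j : ℝ) + 1) * sG l k (j + 1)| + |l * sG l k j| := abs_sub _ _
      _ = ((j : ℝ) + 1) * |sG l k (j + 1)| + l * |sG l k j| := by
          rw [abs_mul, abs_mul, abs_of_pos hl, abs_of_pos (by positivity : (0:ℝ) < (j:ℝ)+1)]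
  refine habs.trans ?_
  have hfac1 : ((Nat.factorial (j + 1) : ℝ)) = ((j : ℝ) + 1) * (Nat.factorial j) := by
    rw [Nat.factorial_succ]; push_cast; ring
  have hfac2 : ((Nat.factorial (j + 2) : ℝ))
      = ((j : ℝ) + 2) * (((j : ℝ) + 1) * (Nat.factorial j)) := by
    rw [Nat.factorial_succ, Nat.factorial_succ]; push_cast; ring
  have hfj : (0 : ℝ) < (Nat.factorial j : ℝ) := by exact_mod_cast Nat.factorial_pos j
  have f1 : ((j : ℝ) + 1) * (l ^ (j + 1 + 1) / (Nat.factorial (j + 1 + 1)))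
      ≤ l ^ 2 * (l ^ j / (Nat.factorial j)) := by
    rw [show j + 1 + 1 = j + 2 from rfl, hfac2, show l ^ (j + 2) = l ^ 2 * l ^ j by ring]
    have key : ((j : ℝ) + 1) / (((j : ℝ) + 2) * (((j : ℝ) + 1) * (Nat.factorial j)))
        ≤ 1 / (Nat.factorial j) := by
      rw [div_le_div_iff₀ (by positivity) hfj]
      nlinarith [mul_nonneg (mul_nonneg (by positivity : (0:ℝ) ≤ (j : ℝ) + 1)
        (by positivity : (0:ℝ) ≤ (j : ℝ) + 1)) hfj.le]
    calc ((j : ℝ) + 1) * (l ^ 2 * l ^ j / (((j : ℝ) + 2) * (((j : ℝ) + 1) * (Nat.factorial j))))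
        = (l ^ 2 * l ^ j) * (((j : ℝ) + 1)
            / (((j : ℝ) + 2) * (((j : ℝ) + 1) * (Nat.factorial j)))) := by ring
      _ ≤ (l ^ 2 * l ^ j) * (1 / (Nat.factorial j)) :=
          mul_le_mul_of_nonneg_left key (by positivity)
      _ = l ^ 2 * (l ^ j / (Nat.factorial j)) := by ring
  have f2 : l * (l ^ (j + 1) / (Nat.factorial (j + 1)))
      ≤ l ^ 2 * (l ^ j / (Nat.factorial j)) := by
    rw [hfac1, show l ^ (j + 1) = l * l ^ j by ring]
    have key : (1 : ℝ) / (((j : ℝ) + 1) * (Nat.factorial j)) ≤ 1 / (Nat.factorial j) := by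
      rw [div_le_div_iff₀ (by positivity) hfj]
      nlinarith [mul_nonneg (Nat.cast_nonneg (α := ℝ) j) hfj.le]
    calc l * (l * l ^ j / (((j : ℝ) + 1) * (Nat.factorial j)))
        = (l ^ 2 * l ^ j) * (1 / (((j : ℝ) + 1) * (Nat.factorial j))) := by ring
      _ ≤ (l ^ 2 * l ^ j) * (1 / (Nat.factorial j)) :=
          mul_le_mul_of_nonneg_left key (by positivity)
      _ = l ^ 2 * (l ^ j / (Nat.factorial j)) := by ring
  have t1 : ((j : ℝ) + 1) * |sG l k (j + 1)| ≤ l ^ 2 * (l ^ j / (Nat.factorial j)) := by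
    refine le_trans (mul_le_mul_of_nonneg_left hG1 (by positivity)) f1
  have t2 : l * |sG l k j| ≤ l ^ 2 * (l ^ j / (Nat.factorial j)) :=
    le_trans (mul_le_mul_of_nonneg_left hG0 hl.le) f2
  calc ((j : ℝ) + 1) * |sG l k (j + 1)| + l * |sG l k j|
      ≤ l ^ 2 * (l ^ j / (Nat.factorial j)) + l ^ 2 * (l ^ j / (Nat.factorial j)) :=
        add_le_add t1 t2
    _ = 2 * (l ^ j / (Nat.factorial j)) * l ^ 2 := by ring

lemma summable_s (hl : 0 < l) (hk : 1 ≤ k) (hf : IsSteinSolution l k f) :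
    Summable (fun j => poissonPMF l j * (f (j + 2) - f (j + 1))) := by
  refine summable_abs_iff.mp ?_
  exact Summable.of_nonneg_of_le (fun j => abs_nonneg _) (abs_s_le hl hk hf)
    ((Real.summable_pow_div_factorial l).mul_left 2)

lemma tendsto_A (hl : 0 < l) (hk : 1 ≤ k) :
    Tendsto (fun N : ℕ => (((N : ℝ) * ((N : ℝ) + 1)) / 2 - l * (N : ℝ)) * sG l k N)
      atTop (nhds 0) := by
  rw [tendsto_zero_iff_abs_tendsto_zero]
  apply squeeze_zero (fun N => abs_nonneg _)
    (g := fun N => ((1 + l) * l) * ((2 * l) ^ N / (Nat.factorial N)))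
  · intro N
    have hG := sG_bound' hl hk N
    have hfac : ((Nat.factorial (N + 1) : ℝ)) = ((N : ℝ) + 1) * (Nat.factorial N) := by
      rw [Nat.factorial_succ]; push_cast; ring
    have h2N : (N : ℝ) + 1 ≤ 2 ^ N := by
      exact_mod_cast Nat.succ_le_of_lt (Nat.lt_two_pow_self : N < 2 ^ N)
    have hfN : (0 : ℝ) < (Nat.factorial N : ℝ) := by exact_mod_cast Nat.factorial_pos N
    have hcoef : |((N : ℝ) * ((N : ℝ) + 1)) / 2 - l * (N : ℝ)|
        ≤ ((N : ℝ) * ((N : ℝ) + 1)) / 2 + l * (N : ℝ) := by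
      have h0 : (0 : ℝ) ≤ (N : ℝ) := Nat.cast_nonneg N
      rw [abs_le]
      constructor <;> nlinarith
    rw [abs_mul]
    have step1 : |((N : ℝ) * ((N : ℝ) + 1)) / 2 - l * (N : ℝ)| * |sG l k N|
        ≤ (((N : ℝ) * ((N : ℝ) + 1)) / 2 + l * (N : ℝ)) * (l ^ (N + 1) / (Nat.factorial (N + 1)))
        := by
      apply mul_le_mul hcoef hG (abs_nonneg _)
      have h0 : (0 : ℝ) ≤ (N : ℝ) := Nat.cast_nonneg N
      nlinarith
    refine step1.trans ?_
    have hcore : ((N : ℝ) * ((N : ℝ) + 1)) / 2 + l * (N : ℝ)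
        ≤ (1 + l) * 2 ^ N * ((N : ℝ) + 1) := by
      have h0 : (0 : ℝ) ≤ (N : ℝ) := Nat.cast_nonneg N
      have hstep : (1 + l) * ((N : ℝ) + 1) * ((N : ℝ) + 1)
          ≤ (1 + l) * ((N : ℝ) + 1) * 2 ^ N :=
        mul_le_mul_of_nonneg_left h2N (by positivity)
      nlinarith [hstep, mul_nonneg hl.le h0, mul_nonneg (mul_nonneg hl.le h0) h0]
    have hpos : (0 : ℝ) ≤ l ^ (N + 1) / (Nat.factorial (N + 1)) := by positivity
    refine (mul_le_mul_of_nonneg_right hcore hpos).trans ?_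
    rw [hfac, show l ^ (N + 1) = l * l ^ N by ring, mul_pow]
    have hN1 : (0 : ℝ) < (N : ℝ) + 1 := by positivity
    apply le_of_eq
    field_simp
  · have h := (Real.summable_pow_div_factorial (2 * l)).tendsto_atTop_zero
    have h2 := h.const_mul ((1 + l) * l)
    simpa using h2

lemma hasSum_shifted (hl : 0 < l) (a : ℕ) :
    HasSum (fun m : ℕ => poissonPMF l m * ((if a ≤ m then (1 : ℝ) else 0) - poissonTail l k))
      (poissonTail l a - poissonTail l k) := by
  have hsum : Summable (fun m => if a ≤ m then poissonPMF l m else 0) := by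
    refine Summable.of_nonneg_of_le (fun m => ?_) (fun m => ?_) (summable_pmf (l := l))
    · by_cases h : a ≤ m <;> simp [h, pmf_nonneg hl m]
    · by_cases h : a ≤ m <;> simp [h, pmf_nonneg hl m]
  have hA : HasSum (fun m => if a ≤ m then poissonPMF l m else 0) (poissonTail l a) := by
    have := hsum.hasSum
    rwa [tsum_ite_tail hl a] at this
  have hB : HasSum (fun m => poissonTail l k * poissonPMF l m) (poissonTail l k * 1) :=
    hasSum_pmf.mul_left _
  have hAB := hA.sub hB
  rw [mul_one] at hAB
  refine hAB.congr_fun fun m => ?_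
  by_cases h : a ≤ m <;> simp [h] <;> ring

lemma hasSum_v (hl : 0 < l) (hk : 1 ≤ k) :
    HasSum (fun i : ℕ => (i : ℝ) * poissonPMF l i * sg l k i) (l * poissonPMF l (k - 1)) := by
  have hshift := (hasSum_shifted (k := k) hl (k - 1)).mul_left l
  have hcong : ∀ m : ℕ, ((m + 1 : ℕ) : ℝ) * poissonPMF l (m + 1) * sg l k (m + 1)
      = l * (poissonPMF l m * ((if k - 1 ≤ m then (1 : ℝ) else 0) - poissonTail l k)) := by
    intro m
    have hp := pmf_succ hl m
    have hsg : sg l k (m + 1) = (if k - 1 ≤ m then (1 : ℝ) else 0) - poissonTail l k := by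
      rw [sg]
      congr 1
      by_cases h : k ≤ m + 1
      · rw [if_pos h, if_pos (by omega)]
      · rw [if_neg h, if_neg (by omega)]
    push_cast
    rw [hsg]
    linear_combination ((if k - 1 ≤ m then (1 : ℝ) else 0) - poissonTail l k) * hp
  have hv1 : HasSum (fun m : ℕ => ((m + 1 : ℕ) : ℝ) * poissonPMF l (m + 1) * sg l k (m + 1))
      (l * (poissonTail l (k - 1) - poissonTail l k)) := hshift.congr_fun hcong
  have hv2 := (hasSum_nat_add_iff (f := fun i : ℕ => (i : ℝ) * poissonPMF l i * sg l k i) 1).mp hv1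
  have hval : l * (poissonTail l (k - 1) - poissonTail l k)
      + ∑ i ∈ Finset.range 1, (i : ℝ) * poissonPMF l i * sg l k i = l * poissonPMF l (k - 1) := by
    rw [Finset.sum_range_one]
    have ht := tail_succ (l := l) (k - 1)
    rw [show k - 1 + 1 = k by omega] at ht
    rw [ht]
    push_cast
    ring
  rwa [hval] at hv2

lemma hasSum_w (hl : 0 < l) (hk : 2 ≤ k) :
    HasSum (fun i : ℕ => (i : ℝ) * ((i : ℝ) - 1) * poissonPMF l i * sg l k i)
      (l ^ 2 * (poissonPMF l (k - 2) + poissonPMF l (k - 1))) := by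
  have hshift := (hasSum_shifted (k := k) hl (k - 2)).mul_left (l ^ 2)
  have hcong : ∀ m : ℕ, ((m + 2 : ℕ) : ℝ) * (((m + 2 : ℕ) : ℝ) - 1) * poissonPMF l (m + 2)
        * sg l k (m + 2)
      = l ^ 2 * (poissonPMF l m * ((if k - 2 ≤ m then (1 : ℝ) else 0) - poissonTail l k)) := by
    intro m
    have hp1 := pmf_succ hl m
    have hp2 := pmf_succ hl (m + 1)
    push_cast at hp2
    have hsg : sg l k (m + 2) = (if k - 2 ≤ m then (1 : ℝ) else 0) - poissonTail l k := by
      rw [sg]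
      congr 1
      by_cases h : k ≤ m + 2
      · rw [if_pos h, if_pos (by omega)]
      · rw [if_neg h, if_neg (by omega)]
    push_cast
    rw [hsg]
    linear_combination (((if k - 2 ≤ m then (1 : ℝ) else 0) - poissonTail l k) * ((m : ℝ) + 1))
        * hp2
      + (((if k - 2 ≤ m then (1 : ℝ) else 0) - poissonTail l k) * l) * hp1
  have hw1 : HasSum (fun m : ℕ => ((m + 2 : ℕ) : ℝ) * (((m + 2 : ℕ) : ℝ) - 1)
        * poissonPMF l (m + 2) * sg l k (m + 2))
      (l ^ 2 * (poissonTail l (k - 2) - poissonTail l k)) := hshift.congr_fun hcong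
  have hw2 := (hasSum_nat_add_iff
    (f := fun i : ℕ => (i : ℝ) * ((i : ℝ) - 1) * poissonPMF l i * sg l k i) 2).mp hw1
  have hval : l ^ 2 * (poissonTail l (k - 2) - poissonTail l k)
      + ∑ i ∈ Finset.range 2, (i : ℝ) * ((i : ℝ) - 1) * poissonPMF l i * sg l k i
      = l ^ 2 * (poissonPMF l (k - 2) + poissonPMF l (k - 1)) := by
    rw [Finset.sum_range_succ, Finset.sum_range_one]
    have ht2 := tail_succ (l := l) (k - 2)
    rw [show k - 2 + 1 = k - 1 by omega] at ht2
    have ht1 := tail_succ (l := l) (k - 1)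
    rw [show k - 1 + 1 = k by omega] at ht1
    rw [ht2, ht1]
    push_cast
    ring
  rwa [hval] at hw2

lemma hasSum_u (hl : 0 < l) (hk : 2 ≤ k) :
    HasSum (fun i : ℕ => poissonPMF l i * sg l k i
        * (l * (i : ℝ) - (i : ℝ) * ((i : ℝ) - 1) / 2))
      (l * (l * poissonPMF l (k - 1))
        - l ^ 2 * (poissonPMF l (k - 2) + poissonPMF l (k - 1)) / 2) := by
  have hv := (hasSum_v (k := k) hl (by omega : 1 ≤ k)).mul_left l
  have hw := (hasSum_w hl hk).div_const 2
  refine (hv.sub hw).congr_fun fun i => ?_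
  ring


/-- For `Y ~ Pn(l)`, `E[Δf(Y+1)] = -(π_{k-2}(l) - π_{k-1}(l))/2`. -/
theorem stein_expected_diff (l : ℝ) (hl : 0 < l) (k : ℕ) (hk : 2 ≤ k) (f : ℕ → ℝ)
    (hf : IsSteinSolution l k f) :
    ∑' j : ℕ, poissonPMF l j * (f (j + 2) - f (j + 1)) =
      -(poissonPMF l (k - 2) - poissonPMF l (k - 1)) / 2 := by
  have hk1 : 1 ≤ k := by omega
  have hs := summable_s hl hk1 hf
  have hT1 := hs.hasSum.tendsto_sum_nat
  set U : ℝ := l * (l * poissonPMF l (k - 1))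
    - l ^ 2 * (poissonPMF l (k - 2) + poissonPMF l (k - 1)) / 2 with hU
  have hu := hasSum_u hl hk
  have hT2 : Filter.Tendsto
      (fun N => ∑ j ∈ Finset.range N, poissonPMF l j * (f (j + 2) - f (j + 1)))
      Filter.atTop (nhds ((0 + U) / l ^ 2)) := by
    have hA := tendsto_A (k := k) hl hk1
    have hUt : Filter.Tendsto (fun N : ℕ => ∑ i ∈ Finset.range (N + 1),
        poissonPMF l i * sg l k i * (l * (i : ℝ) - (i : ℝ) * ((i : ℝ) - 1) / 2))
        Filter.atTop (nhds U) := hu.tendsto_sum_nat.comp (Filter.tendsto_add_atTop_nat 1)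
    have hcomb := (hA.add hUt).div_const (l ^ 2)
    exact Filter.Tendsto.congr (fun N => (sum_s_eq hl hf N).symm) hcomb
  have heq := tendsto_nhds_unique hT1 hT2
  rw [heq, hU]
  field_simp
  ring
end
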